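/- arXiv:2402.18391 — 2 statements merged into one kernel-verified Lean document; each statement's English description precedes it below -/
import Mathlib

section
/- Any two linear extensions of a finite partial order are connected by adjacent transpositions of incomparable elements: let ≤ be a partial order on a finite set E, and let L and L' be two linear extensions of ≤ (lists enumerating E without repetition whose induced total orders contain ≤). Then there is a finite sequence of lists L = L_0, L_1, …, L_n = L', each a linear extension of ≤, such that for each i, L_{i+1} is obtained from L_i by transposing two adjacent elements that are incomparable under ≤. -/
/-- `L` is a linear extension of the partial order `≤` on the finite type `E`:
it enumerates every element exactly once, and whenever `x ≤ y` with `x ≠ y`,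
`x` occurs before `y` in `L`. -/
def IsLinExt {E : Type*} [PartialOrder E] (L : List E) : Prop :=
  L.Nodup ∧ (∀ x : E, x ∈ L) ∧
    ∀ x y : E, x ≤ y → x ≠ y → List.Sublist [x, y] L

/-- `x` and `y` are incomparable under the partial order. -/
def Incomp {E : Type*} [PartialOrder E] (x y : E) : Prop :=
  x ≠ y ∧ ¬ x ≤ y ∧ ¬ y ≤ x

/-! Two linear extensions `L`, `L'` are permutations of each other, both sorted for the
relation `a, b ↦ ¬ b ≤ a`. Let `x` be the head of `L'` and write `L = p ++ x :: q`. Every `y ∈ p`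
precedes `x` in `L` and follows it in `L'`, so `y` and `x` are incomparable, and `x` can be bubbled
to the front of `L` by adjacent swaps of incomparable elements. Then recurse on `p ++ q` and the tail
of `L'`. Such swaps preserve sortedness, so every intermediate list is a linear extension. -/

theorem Relation.ReflTransGen.restrict {α : Type*} {R : α → α → Prop} {P : α → Prop}
    (hP : ∀ a b, R a b → P a → P b) {a b : α} (h : ReflTransGen R a b) (ha : P a) :
    ReflTransGen (fun x y => P x ∧ P y ∧ R x y) a b := by
  induction h using ReflTransGen.head_induction_on with
  | refl => exact .refl
  | head hac _ ih => exact .head ⟨ha, hP _ _ hac ha, hac⟩ (ih (hP _ _ hac ha))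

namespace List
variable {α : Type*} {r : α → α → Prop}

theorem Nodup.not_sublist_pair_swap {l : List α} (hl : l.Nodup) {a b : α} (hab : [a, b] <+ l) :
    ¬ [b, a] <+ l := by
  induction l with
  | nil => simp at hab
  | cons c t ih =>
    rw [nodup_cons] at hl
    rw [sublist_cons_iff] at hab ⊢
    grind

theorem pair_sublist_or_of_mem {l : List α} {a b : α} (ha : a ∈ l) (hb : b ∈ l) (hab : a ≠ b) :
    [a, b] <+ l ∨ [b, a] <+ l := by
  induction l with
  | nil => simp at ha
  | cons c t ih =>
    simp only [sublist_cons_iff]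
    grind

def AdjSwap (r : α → α → Prop) (l₁ l₂ : List α) : Prop :=
  ∃ (u v : List α) (x y : α), r x y ∧ r y x ∧ l₁ = u ++ [x, y] ++ v ∧ l₂ = u ++ [y, x] ++ v

theorem AdjSwap.perm {l₁ l₂ : List α} : AdjSwap r l₁ l₂ → l₁ ~ l₂ := by
  rintro ⟨u, v, x, y, -, -, rfl, rfl⟩
  simpa using (Perm.swap y x v).append_left u

theorem AdjSwap.pairwise {l₁ l₂ : List α} : AdjSwap r l₁ l₂ → l₁.Pairwise r → l₂.Pairwise r := by
  rintro ⟨u, v, x, y, -, hyx, rfl, rfl⟩ h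
  simp only [pairwise_append, pairwise_cons, mem_append, mem_cons] at h ⊢
  grind

theorem AdjSwap.cons {l₁ l₂ : List α} (a : α) (h : AdjSwap r l₁ l₂) :
    AdjSwap r (a :: l₁) (a :: l₂) := by
  obtain ⟨u, v, x, y, hxy, hyx, rfl, rfl⟩ := h
  exact ⟨a :: u, v, x, y, hxy, hyx, rfl, rfl⟩

theorem reflTransGen_adjSwap_append_cons {p q : List α} {x : α}
    (hp : ∀ y ∈ p, r y x ∧ r x y) :
    Relation.ReflTransGen (AdjSwap r) (p ++ x :: q) (x :: (p ++ q)) := by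
  induction p with
  | nil => exact .refl
  | cons y p ih =>
    have hy := hp y mem_cons_self
    have hswap : AdjSwap r (y :: x :: (p ++ q)) (x :: y :: (p ++ q)) :=
      ⟨[], p ++ q, y, x, hy.1, hy.2, rfl, rfl⟩
    exact ((ih fun z hz => hp z (mem_cons_of_mem y hz)).lift (y :: ·) fun _ _ => .cons y).tail
      hswap

theorem Perm.reflTransGen_adjSwap {l₁ l₂ : List α} (hp : l₁ ~ l₂) (h₁ : l₁.Pairwise r)
    (h₂ : l₂.Pairwise r) : Relation.ReflTransGen (AdjSwap r) l₁ l₂ := by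
  induction l₂ generalizing l₁ with
  | nil => rw [hp.eq_nil]
  | cons x t ih =>
    obtain ⟨p, q, rfl⟩ := append_of_mem (hp.mem_iff.2 mem_cons_self)
    have hbubble : Relation.ReflTransGen (AdjSwap r) (p ++ x :: q) (x :: (p ++ q)) := by
      refine reflTransGen_adjSwap_append_cons fun y hy => ⟨?_, ?_⟩
      · exact (pairwise_append.1 h₁).2.2 y hy x mem_cons_self
      · rcases mem_cons.1 (hp.subset (mem_append_left _ hy)) with rfl | hyt
        · exact (pairwise_append.1 h₁).2.2 y hy y mem_cons_self
        · exact rel_of_pairwise_cons h₂ hyt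
    have hrest : Relation.ReflTransGen (AdjSwap r) (p ++ q) t :=
      ih (perm_middle.symm.trans hp).cons_inv
        (h₁.sublist ((Sublist.refl p).append (sublist_cons_self x q)))
        (pairwise_cons.1 h₂).2
    exact hbubble.trans (hrest.lift (x :: ·) fun _ _ => .cons x)

end List

section LinearExtension
variable {E : Type*} [PartialOrder E]

theorem isLinExt_iff {L : List E} :
    IsLinExt L ↔ L.Nodup ∧ (∀ x, x ∈ L) ∧ L.Pairwise (fun a b => ¬ b ≤ a) := by
  refine and_congr_right fun hnd => and_congr_right fun hmem => ?_
  rw [List.pairwise_iff_forall_sublist]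
  constructor
  · intro h a b hab hba
    have hne : b ≠ a := fun e => by
      subst e
      exact List.nodup_iff_sublist.1 hnd b hab
    exact hnd.not_sublist_pair_swap hab (h b a hba hne)
  · intro h x y hxy hne
    exact (List.pair_sublist_or_of_mem (hmem x) (hmem y) hne).resolve_right fun hyx => h hyx hxy

theorem IsLinExt.perm {L L' : List E} (h : IsLinExt L) (h' : IsLinExt L') : L.Perm L' :=
  (List.perm_ext_iff_of_nodup h.1 h'.1).2 fun a => iff_of_true (h.2.1 a) (h'.2.1 a)

theorem IsLinExt.adjSwap {L L' : List E} (h : IsLinExt L)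
    (hs : List.AdjSwap (fun a b => ¬ b ≤ a) L L') : IsLinExt L' := by
  obtain ⟨hnd, hmem, hpw⟩ := isLinExt_iff.1 h
  exact isLinExt_iff.2 ⟨hs.perm.nodup_iff.1 hnd, fun x => hs.perm.subset (hmem x), hs.pairwise hpw⟩

end LinearExtension

theorem linear_extensions_connected_general {E : Type*} [PartialOrder E]
    (L L' : List E) (hL : IsLinExt L) (hL' : IsLinExt L') :
    Relation.ReflTransGen
      (fun L₁ L₂ : List E => IsLinExt L₁ ∧ IsLinExt L₂ ∧
        ∃ (u v : List E) (x y : E), Incomp x y ∧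
          L₁ = u ++ [x, y] ++ v ∧ L₂ = u ++ [y, x] ++ v)
      L L' := by
  have hswaps := (hL.perm hL').reflTransGen_adjSwap (isLinExt_iff.1 hL).2.2 (isLinExt_iff.1 hL').2.2
  refine Relation.ReflTransGen.mono ?_ _ _ (hswaps.restrict (fun _ _ hs h => h.adjSwap hs) hL)
  rintro _ _ ⟨h₁, h₂, u, v, x, y, hyx, hxy, rfl, rfl⟩
  have hne : x ≠ y := by simpa using h₁.1.sublist (List.infix_append u [x, y] v).sublist
  exact ⟨h₁, h₂, u, v, x, y, ⟨hne, hxy, hyx⟩, rfl, rfl⟩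

/-- Any two linear extensions of a finite partial order are connected by a
sequence of adjacent transpositions of incomparable elements, all intermediate
lists being linear extensions. -/
theorem linear_extensions_connected {E : Type*} [Fintype E] [PartialOrder E]
    (L L' : List E) (hL : IsLinExt L) (hL' : IsLinExt L') :
    Relation.ReflTransGen
      (fun L₁ L₂ : List E => IsLinExt L₁ ∧ IsLinExt L₂ ∧
        ∃ (u v : List E) (x y : E), Incomp x y ∧
          L₁ = u ++ [x, y] ++ v ∧ L₂ = u ++ [y, x] ++ v)
      L L' :=
  linear_extensions_connected_general L L' hL hL'
end

section
/- If a concurrent trace has the necessary orderings for a DFA monitor, then all its linearizations produce the same monitor state: let A be a deterministic finite automaton over Σ with extended transition function δ*, and let D be its causal dependence relation, i.e., (a, b) ∈ D iff there exists a state q with δ*(q, [a, b]) ≠ δ*(q, [b, a]). Let (E, →t) be a finite concurrent trace (→t a partial order on the finite set E) with labeling ℓ : E → Σ, and suppose tno(t, D) holds: for all distinct e, e' ∈ E, either e and e' are comparable under →t or (ℓ(e), ℓ(e')) ∉ D. Then for any two linear extensions L, L' of →t and every state q, δ*(q, map ℓ L) = δ*(q, map ℓ L'); in particular, the verdict of the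 monitor A is independent of the chosen linearization. -/
/-- Extended transition function of a DFA with transition function `δ`. -/
def dstar {Q σ : Type*} (δ : Q → σ → Q) : Q → List σ → Q
  | q, [] => q
  | q, a :: w => dstar δ (δ q a) w

/-- `L` is a linear extension of the relation `rt` on `E`: it enumerates every
event exactly once, and whenever `rt x y` with `x ≠ y`, `x` occurs before `y`. -/
def IsLinExtOf {E : Type*} (rt : E → E → Prop) (L : List E) : Prop :=
  L.Nodup ∧ (∀ x : E, x ∈ L) ∧
    ∀ x y : E, rt x y → x ≠ y → List.Sublist [x, y] L

lemma pair_sublist_antisymm {E : Type*} {x y : E} :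
    ∀ {l : List E}, l.Nodup → List.Sublist [x, y] l → List.Sublist [y, x] l → x = y := by
  intro l
  induction l with
  | nil => intro _ h; simp at h
  | cons a t ih =>
    intro hnd h1 h2
    rcases List.cons_sublist_cons'.1 h1 with ha | ⟨hxa, ha⟩
    · rcases List.cons_sublist_cons'.1 h2 with hb | ⟨hya, hb⟩
      · exact ih hnd.of_cons ha hb
      · subst hya
        exact absurd (ha.subset (by simp : y ∈ [x, y])) ((List.nodup_cons.1 hnd).1)
    · rcases List.cons_sublist_cons'.1 h2 with hb | ⟨hya, hb⟩
      · subst hxa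
        exact absurd (hb.subset (by simp : x ∈ [y, x])) ((List.nodup_cons.1 hnd).1)
      · exact hxa.trans hya.symm

lemma dstar_append {Q σ : Type*} (δ : Q → σ → Q) :
    ∀ (u v : List σ) (q : Q), dstar δ q (u ++ v) = dstar δ (dstar δ q u) v := by
  intro u
  induction u with
  | nil => intro v q; rfl
  | cons a u ih => intro v q; simp only [List.cons_append, dstar]; exact ih v _

lemma dstar_comm_single {Q σ E : Type*} (δ : Q → σ → Q) (ℓ : E → σ) (x : E) :
    ∀ (P : List E),
      (∀ y ∈ P, ∀ r : Q, δ (δ r (ℓ x)) (ℓ y) = δ (δ r (ℓ y)) (ℓ x)) →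
      ∀ q : Q, δ (dstar δ q (List.map ℓ P)) (ℓ x) = dstar δ (δ q (ℓ x)) (List.map ℓ P) := by
  intro P
  induction P with
  | nil => intro _ q; rfl
  | cons a P ih =>
    intro hc q
    simp only [List.map_cons, dstar]
    rw [ih (fun y hy => hc y (List.mem_cons_of_mem _ hy)), hc a (by simp) q]

lemma main_perm {Q σ E : Type*} (δ : Q → σ → Q) (ℓ : E → σ) :
    ∀ (L L' : List E), L.Nodup → L.Perm L' →
      (∀ x y : E, List.Sublist [x, y] L → List.Sublist [y, x] L' →
        ∀ r : Q, δ (δ r (ℓ x)) (ℓ y) = δ (δ r (ℓ y)) (ℓ x)) →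
      ∀ q : Q, dstar δ q (L.map ℓ) = dstar δ q (L'.map ℓ) := by
  intro L
  induction L with
  | nil => intro L' _ hp _ q; rw [hp.nil_eq]
  | cons x T ih =>
    intro L' hnd hp hcomm q
    have hx : x ∈ L' := hp.subset (by simp)
    obtain ⟨P, S, rfl⟩ := List.append_of_mem hx
    have hnd' : (P ++ x :: S).Nodup := hp.nodup hnd
    have hcP : ∀ y ∈ P, ∀ r : Q, δ (δ r (ℓ x)) (ℓ y) = δ (δ r (ℓ y)) (ℓ x) := by
      intro y hy r
      have hyT : y ∈ T := by
        have hyx : y ≠ x := by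
          rintro rfl
          exact (List.disjoint_of_nodup_append hnd') hy (by simp)
        have hyL : y ∈ x :: T := hp.mem_iff.2 (by simp [hy])
        rcases List.mem_cons.1 hyL with h | h
        · exact absurd h hyx
        · exact h
      refine hcomm x y (List.cons_sublist_cons.2 (List.singleton_sublist.2 hyT)) ?_ r
      exact (List.singleton_sublist.2 hy).append
        (List.cons_sublist_cons.2 (List.nil_sublist S))
    have hmap : List.map ℓ (P ++ x :: S) = List.map ℓ P ++ ℓ x :: List.map ℓ S := by simp
    rw [hmap, dstar_append, dstar]
    rw [dstar_comm_single δ ℓ x P hcP q, ← dstar_append]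
    simp only [List.map_cons, dstar, ← List.map_append]
    apply ih (P ++ S) hnd.of_cons
    · exact (List.perm_cons x).1 (hp.trans List.perm_middle)
    · intro a b hab hba r
      refine hcomm a b (hab.cons x) (hba.trans ?_) r
      refine List.Sublist.append (List.Sublist.refl P) (List.sublist_cons_self x S)

/-- If a finite concurrent trace has the necessary orderings w.r.t. the causal
dependence relation of a DFA, then all linearizations of the trace drive the
DFA to the same state: the monitor verdict is linearization-independent. -/
theorem tno_linearizations_same_state {Q σ E : Type*} [Fintype Q] [Fintype σ]
    [Fintype E] (δ : Q → σ → Q) (ℓ : E → σ)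
    (rt : E → E → Prop)
    (hrefl : ∀ x : E, rt x x)
    (hantisymm : ∀ x y : E, rt x y → rt y x → x = y)
    (htrans : ∀ x y z : E, rt x y → rt y z → rt x z)
    -- the causal dependence relation of the DFA:
    (D : Set (σ × σ))
    (hD : D = {p : σ × σ | ∃ q : Q, dstar δ q [p.1, p.2] ≠ dstar δ q [p.2, p.1]})
    -- the trace has the necessary orderings w.r.t. `D`:
    (htno : ∀ e e' : E, e ≠ e' → rt e e' ∨ rt e' e ∨ (ℓ e, ℓ e') ∉ D)
    (L L' : List E) (hL : IsLinExtOf rt L) (hL' : IsLinExtOf rt L') :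
    ∀ q : Q, dstar δ q (L.map ℓ) = dstar δ q (L'.map ℓ) := by
  obtain ⟨hnd, hmem, hord⟩ := hL
  obtain ⟨hnd', hmem', hord'⟩ := hL'
  apply main_perm δ ℓ L L' hnd
  · exact (List.perm_ext_iff_of_nodup hnd hnd').2 (fun a => by simp [hmem, hmem'])
  · intro x y hxy hyx r
    have hne : x ≠ y := by
      rintro rfl
      have : ¬ [x, x].Nodup := by simp
      exact this (hxy.nodup hnd)
    rcases htno x y hne with h | h | h
    · exact absurd (pair_sublist_antisymm hnd' (hord' x y h hne) hyx) hne
    · exact absurd (pair_sublist_antisymm hnd (hord y x h hne.symm) hxy) hne.symm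
    · rw [hD] at h
      simp only [Set.mem_setOf_eq, not_exists, not_not] at h
      have := h r
      simpa [dstar] using this
end
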